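/- arXiv:1212.2732 — 12 statements merged into one kernel-verified Lean document; each statement's English description precedes it below -/
import Mathlib

section
/- For all positive integers i and j, ⌊(√(8·P(i,j) - 7) - 1)/2⌋ = i + j - 2, where the square root is the real square root and ⌊·⌋ is the floor function. -/
/-- The Cantor anti-diagonal pairing function `P(i,j) = (i+j-1)(i+j-2)/2 + i`. -/
def P (i j : ℤ) : ℤ := (i + j - 1) * (i + j - 2) / 2 + i

/-- For all positive integers `i, j`, one has `⌊(√(8·P(i,j) - 7) - 1)/2⌋ = i + j - 2`. -/
theorem floor_sqrt_of_cantorPairing (i j : ℤ) (hi : 0 < i) (hj : 0 < j) :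
    ⌊(Real.sqrt (8 * (P i j : ℝ) - 7) - 1) / 2⌋ = i + j - 2 := by
  set n : ℤ := i + j - 2 with hn
  have hn0 : 0 ≤ n := by omega
  have hE : (2:ℤ) ∣ (i + j - 1) * (i + j - 2) := by
    have := Int.even_mul_succ_self (i + j - 2)
    have h : (i + j - 2) * (i + j - 2 + 1) = (i + j - 1) * (i + j - 2) := by ring
    rw [h] at this
    exact this.two_dvd
  have hP : 8 * P i j = 4 * ((n + 1) * n) + 8 * i := by
    have h1 : (i + j - 1) * (i + j - 2) / 2 * 2 = (i + j - 1) * (i + j - 2) :=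
      Int.ediv_mul_cancel hE
    have h2 : (i + j - 1) * (i + j - 2) = (n + 1) * n := by rw [hn]; ring
    unfold P
    nlinarith [h1, h2]
  have hx : (8 * (P i j : ℝ) - 7) = ((4 * ((n + 1) * n) + 8 * i - 7 : ℤ) : ℝ) := by
    push_cast
    have : ((P i j : ℝ)) = (((4 * ((n + 1) * n) + 8 * i : ℤ) : ℝ)) / 8 := by
      rw [← hP]; push_cast; ring
    rw [this]; push_cast; ring
  have hlow : ((2 * n + 1 : ℤ) : ℝ) ^ 2 ≤ 8 * (P i j : ℝ) - 7 := by
    rw [hx]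
    have : (2 * n + 1) ^ 2 ≤ 4 * ((n + 1) * n) + 8 * i - 7 := by nlinarith
    exact_mod_cast this
  have hhigh : 8 * (P i j : ℝ) - 7 < ((2 * n + 3 : ℤ) : ℝ) ^ 2 := by
    rw [hx]
    have : 4 * ((n + 1) * n) + 8 * i - 7 < (2 * n + 3) ^ 2 := by nlinarith [hn, hj]
    exact_mod_cast this
  have hpos : (0:ℝ) ≤ ((2 * n + 1 : ℤ) : ℝ) := by
    have : (0:ℤ) ≤ 2 * n + 1 := by omega
    exact_mod_cast this
  have hs1 : ((2 * n + 1 : ℤ) : ℝ) ≤ Real.sqrt (8 * (P i j : ℝ) - 7) :=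
    (Real.le_sqrt hpos (le_trans (sq_nonneg _) hlow)).mpr hlow
  have hpos3 : (0:ℝ) < ((2 * n + 3 : ℤ) : ℝ) := by
    have : (0:ℤ) < 2 * n + 3 := by omega
    exact_mod_cast this
  have hs2 : Real.sqrt (8 * (P i j : ℝ) - 7) < ((2 * n + 3 : ℤ) : ℝ) :=
    (Real.sqrt_lt' hpos3).mpr hhigh
  rw [Int.floor_eq_iff]
  constructor
  · push_cast at hs1 ⊢
    linarith
  · push_cast at hs2 ⊢
    linarith
end

section
/- Let a : ℤ⁺ → ℤ be any sequence and define ω : ℤ⁺ → ℤ by ω(n) = a((t²+3t+4)/2 - n) where t = ⌊(√(8n-7) - 1)/2⌋. Then ω is the reverse reluctant sequence of a: for every positive integer k and every positive integer m with 1 ≤ m ≤ k, one has ω(k(k-1)/2 + m) = a(k + 1 - m). -/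
/-- If `ω(n) = a((t²+3t+4)/2 - n)` with `t = ⌊(√(8n-7) - 1)/2⌋` for all positive `n`,
then `ω` is the reverse reluctant sequence of `a`: row `k` of the triangle consists of
`a(k), a(k-1), …, a(1)`, i.e. `ω(k(k-1)/2 + m) = a(k + 1 - m)` for `1 ≤ m ≤ k`. -/
theorem reverse_reluctant_sequence (a ω : ℤ → ℤ)
    (hω : ∀ n : ℤ, 0 < n →
      ω n = a ((⌊(Real.sqrt (8 * (n : ℝ) - 7) - 1) / 2⌋ ^ 2 +
        3 * ⌊(Real.sqrt (8 * (n : ℝ) - 7) - 1) / 2⌋ + 4) / 2 - n))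
    (k m : ℤ) (hk : 0 < k) (hm1 : 1 ≤ m) (hmk : m ≤ k) :
    ω (k * (k - 1) / 2 + m) = a (k + 1 - m) := by
  obtain ⟨j, hj⟩ := Int.even_mul_succ_self (k - 1)
  have hj' : k * (k - 1) = 2 * j := by linear_combination hj
  have hdiv : k * (k - 1) / 2 = j := by omega
  set n : ℤ := k * (k - 1) / 2 + m with hn
  have hnval : n = j + m := by omega
  have hjk : 2 * j = k ^ 2 - k := by linear_combination -hj'
  have hn0 : 0 < n := by nlinarith
  have hkR : (1 : ℝ) ≤ (k : ℝ) := by exact_mod_cast hk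
  have hm1R : (1 : ℝ) ≤ (m : ℝ) := by exact_mod_cast hm1
  have hmkR : (m : ℝ) ≤ (k : ℝ) := by exact_mod_cast hmk
  have hnR : (n : ℝ) = (j : ℝ) + (m : ℝ) := by exact_mod_cast hnval
  have hjkR : 2 * (j : ℝ) = (k : ℝ) ^ 2 - (k : ℝ) := by exact_mod_cast hjk
  rw [hω n hn0]
  have hlow : (2 * (k : ℝ) - 1) ≤ Real.sqrt (8 * (n : ℝ) - 7) := by
    rw [show (2 * (k : ℝ) - 1) = Real.sqrt ((2 * (k : ℝ) - 1) ^ 2) from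
      (Real.sqrt_sq (by linarith)).symm]
    apply Real.sqrt_le_sqrt
    nlinarith
  have hhigh : Real.sqrt (8 * (n : ℝ) - 7) < 2 * (k : ℝ) + 1 := by
    rw [Real.sqrt_lt' (by linarith)]
    nlinarith
  have hfloor : ⌊(Real.sqrt (8 * (n : ℝ) - 7) - 1) / 2⌋ = k - 1 := by
    rw [Int.floor_eq_iff]
    constructor
    · push_cast
      linarith
    · push_cast
      linarith
  rw [hfloor]
  congr 1
  have : (k - 1) ^ 2 + 3 * (k - 1) + 4 = 2 * (j + k + 1) := by linear_combination -hjk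
  omega
end

section
/- Let k be a positive integer. For all positive integers i, j, setting n = P(i,j) and t = ⌊(√(8n-7) - 1)/2⌋, one has max{ki + j - k, i + kj - k} = k(t+1) + (k-1)·max{t(t+1)/2 - n, n - (t²+3t+4)/2}. -/
/-- For a positive integer `k` and positive integers `i, j`, with `n = P(i,j)` and
`t = ⌊(√(8n-7) - 1)/2⌋`, one has
`max{ki+j-k, i+kj-k} = k(t+1) + (k-1)·max{t(t+1)/2 - n, n - (t²+3t+4)/2}`. -/
theorem max_index_formula (k : ℤ) (hk : 0 < k)
    (i j : ℤ) (hi : 0 < i) (hj : 0 < j) :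
    let n : ℤ := P i j
    let t : ℤ := ⌊(Real.sqrt (8 * (n : ℝ) - 7) - 1) / 2⌋
    max (k * i + j - k) (i + k * j - k) =
      k * (t + 1) + (k - 1) * max (t * (t + 1) / 2 - n) (n - (t ^ 2 + 3 * t + 4) / 2) := by
  intro n t
  set s : ℤ := i + j - 2 with hs
  -- the product (i+j-1)(i+j-2) = (s+1)*s is even
  obtain ⟨c, hc⟩ : Even (s * (s + 1)) := Int.even_mul_succ_self s
  have hc2 : s * (s + 1) = 2 * c := by linarith
  have hn : n = c + i := by
    show P i j = c + i
    unfold P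
    have : (i + j - 1) * (i + j - 2) = 2 * c := by
      rw [← hc2]; ring
    rw [this]
    omega
  have hs0 : 0 ≤ s := by omega
  -- bounds for 8n-7
  have h1 : (2 * s + 1) ^ 2 ≤ 8 * n - 7 := by nlinarith [hc2, hn]
  have h2 : 8 * n - 7 < (2 * s + 3) ^ 2 := by nlinarith [hc2, hn, hi, hj]
  -- t = s
  have hts : t = s := by
    have hx0 : (0 : ℝ) ≤ 8 * (n : ℝ) - 7 := by
      have : (0 : ℤ) ≤ 8 * n - 7 := by nlinarith
      exact_mod_cast this
    have hle : ((2 * s + 1 : ℤ) : ℝ) ≤ Real.sqrt (8 * (n : ℝ) - 7) := by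
      have h1' : ((2 * s + 1 : ℤ) : ℝ) ^ 2 ≤ 8 * (n : ℝ) - 7 := by
        exact_mod_cast h1
      have hp : (0:ℝ) ≤ ((2 * s + 1 : ℤ) : ℝ) := by
        have : (0:ℤ) ≤ 2 * s + 1 := by omega
        exact_mod_cast this
      calc ((2 * s + 1 : ℤ) : ℝ) = Real.sqrt (((2 * s + 1 : ℤ) : ℝ) ^ 2) :=
            (Real.sqrt_sq hp).symm
        _ ≤ Real.sqrt (8 * (n : ℝ) - 7) := Real.sqrt_le_sqrt h1' 
    have hlt : Real.sqrt (8 * (n : ℝ) - 7) < ((2 * s + 3 : ℤ) : ℝ) := by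
      have h2' : (8 * (n : ℝ) - 7) < (((2 * s + 3) ^ 2 : ℤ) : ℝ) := by exact_mod_cast h2
      push_cast at h2'
      have h3 : (0 : ℝ) < 2 * (s : ℝ) + 3 := by
        have : (0:ℝ) ≤ (s:ℝ) := by exact_mod_cast hs0
        linarith
      calc Real.sqrt (8 * (n : ℝ) - 7) < Real.sqrt ((2 * (s:ℝ) + 3) ^ 2) :=
            Real.sqrt_lt_sqrt hx0 (by linarith)
        _ = 2 * (s:ℝ) + 3 := by
            rw [Real.sqrt_sq h3.le]
        _ = ((2 * s + 3 : ℤ) : ℝ) := by push_cast; ring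
    apply Int.floor_eq_iff.mpr
    push_cast at hle hlt ⊢
    constructor <;> [linarith; linarith]
  rw [hts]
  have e1 : s * (s + 1) / 2 - n = -i := by omega
  have e2 : n - (s ^ 2 + 3 * s + 4) / 2 = -j := by
    have : s ^ 2 + 3 * s + 4 = 2 * (c + s + 2) := by nlinarith [hc2]
    omega
  rw [e1, e2]
  rcases le_total i j with h | h
  · rw [max_eq_right (by nlinarith), max_eq_left (by omega)]
    ring
  · rw [max_eq_left (by nlinarith), max_eq_right (by omega)]
    ring
end

section
/- Let k be a positive integer and define f(i,j) = i - j + 1 if i ≥ j and f(i,j) = j - i + k - 1 if i < j. For all positive integers i, j, setting n = P(i,j) and t = ⌊(√(8n-7) - 1)/2⌋, one has f(i,j) = |(t+1)² - 2n| + k·⌊(t²+3t+2-2n)/(t+1)⌋. -/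
/-- `f(i,j) = i - j + 1` if `i ≥ j`, and `f(i,j) = j - i + k - 1` if `i < j`. -/
def f (k i j : ℤ) : ℤ := if j ≤ i then i - j + 1 else j - i + k - 1

/-- For a positive integer `k` and positive integers `i, j`, with `n = P(i,j)` and
`t = ⌊(√(8n-7) - 1)/2⌋`, one has
`f(i,j) = |(t+1)² - 2n| + k·⌊(t²+3t+2-2n)/(t+1)⌋`. -/
theorem shifted_segments_index_formula (k : ℤ) (hk : 0 < k)
    (i j : ℤ) (hi : 0 < i) (hj : 0 < j) :
    let n : ℤ := P i j
    let t : ℤ := ⌊(Real.sqrt (8 * (n : ℝ) - 7) - 1) / 2⌋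
    f k i j = |(t + 1) ^ 2 - 2 * n| +
      k * ⌊((t : ℚ) ^ 2 + 3 * t + 2 - 2 * n) / (t + 1)⌋ := by
  intro n t
  set s : ℤ := i + j - 1 with hs
  have hs1 : 1 ≤ s := by omega
  obtain ⟨c, hc⟩ : ∃ c, s * (s - 1) = c + c := by
    obtain ⟨c, hc⟩ := Int.even_mul_succ_self (s - 1)
    exact ⟨c, by linarith [hc]⟩
  have hn : n = c + i := by
    show (i + j - 1) * (i + j - 2) / 2 + i = _
    have h1 : (i + j - 1) * (i + j - 2) = c + c := by rw [← hc]; ring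
    omega
  have h2n : 2 * n = s * (s - 1) + 2 * i := by rw [hn, hc]; ring
  have his : i ≤ s := by omega
  -- t = s - 1
  have ht : t = s - 1 := by
    have hX : (0:ℝ) ≤ 8 * (n:ℝ) - 7 := by
      have : (1:ℤ) ≤ n := by nlinarith
      push_cast
      have : (1:ℝ) ≤ (n:ℝ) := by exact_mod_cast this
      linarith
    have hu0 : 0 ≤ Real.sqrt (8*(n:ℝ)-7) := Real.sqrt_nonneg _
    have hu2 : Real.sqrt (8*(n:ℝ)-7) ^ 2 = 8*(n:ℝ)-7 := Real.sq_sqrt hX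
    have h2nR : 8*(n:ℝ)-7 = 4*(s:ℝ)^2 - 4*s + 8*i - 7 := by
      have : (2*n : ℤ) = s * (s-1) + 2*i := h2n
      have := congrArg (Int.cast : ℤ → ℝ) this
      push_cast at this
      nlinarith [this]
    have hlow : (2*(s:ℝ) - 1) ≤ Real.sqrt (8*(n:ℝ)-7) := by
      nlinarith [hu2, h2nR, hu0, (show (1:ℝ) ≤ (i:ℝ) by exact_mod_cast hi),
        (show (1:ℝ) ≤ (s:ℝ) by exact_mod_cast hs1)]
    have hhigh : Real.sqrt (8*(n:ℝ)-7) < 2*(s:ℝ) + 1 := by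
      nlinarith [hu2, h2nR, hu0, (show (i:ℝ) ≤ (s:ℝ) by exact_mod_cast his),
        (show (1:ℝ) ≤ (s:ℝ) by exact_mod_cast hs1)]
    show ⌊(Real.sqrt (8 * (n : ℝ) - 7) - 1) / 2⌋ = s - 1
    rw [Int.floor_eq_iff]
    constructor
    · push_cast; linarith
    · push_cast; linarith
  -- numerator simplification
  have ht1 : (t : ℚ) + 1 = (s : ℚ) := by rw [ht]; push_cast; ring
  have hnum : (t : ℚ) ^ 2 + 3 * t + 2 - 2 * n = 2 * (j : ℚ) - 2 := by
    rw [ht]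
    have h1 := congrArg (Int.cast : ℤ → ℚ) h2n
    have h2 := congrArg (Int.cast : ℤ → ℚ) hs
    push_cast at h1 h2 ⊢
    linear_combination -h1 + 2 * h2
  have habs : (t + 1) ^ 2 - 2 * n = s - 2 * i := by
    rw [ht]; linear_combination -h2n
  have hsQ : (0:ℚ) < (s:ℚ) := by exact_mod_cast hs1
  rw [habs, hnum, ht1]
  by_cases hji : j ≤ i
  · have hfl : ⌊(2 * (j:ℚ) - 2) / (s:ℚ)⌋ = 0 := by
      rw [Int.floor_eq_iff]
      constructor
      · push_cast
        apply div_nonneg _ (le_of_lt hsQ)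
        have : (1:ℚ) ≤ (j:ℚ) := by exact_mod_cast hj
        linarith
      · rw [div_lt_iff₀ hsQ]
        have : 2 * (j:ℚ) - 2 < (s:ℚ) := by
          have : 2 * j - 2 < s := by omega
          exact_mod_cast this
        push_cast
        linarith
    rw [hfl]
    simp only [f, if_pos hji]
    have : |s - 2*i| = i - j + 1 := by
      rw [abs_of_nonpos (by omega)]; omega
    omega
  · have hfl : ⌊(2 * (j:ℚ) - 2) / (s:ℚ)⌋ = 1 := by
      rw [Int.floor_eq_iff]
      constructor
      · rw [le_div_iff₀ hsQ]
        have : (s:ℚ) ≤ 2 * (j:ℚ) - 2 := by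
          have : s ≤ 2 * j - 2 := by omega
          exact_mod_cast this
        push_cast
        linarith
      · rw [div_lt_iff₀ hsQ]
        have : 2 * (j:ℚ) - 2 < 2 * (s:ℚ) := by
          have : 2 * j - 2 < 2 * s := by omega
          exact_mod_cast this
        push_cast
        linarith
    rw [hfl]
    simp only [f, if_neg hji]
    have : |s - 2*i| = j - i - 1 := by
      rw [abs_of_nonneg (by omega)]; omega
    omega
end

section
/- The center-to-edges diagonal enumeration E : ℤ⁺ × ℤ⁺ → ℤ⁺ defined by E(i,j) = (i(i+1) + (j-1)(2i+j-4))/2 if i ≥ j, and E(i,j) = (i(i+1) + (j-1)(2i+j-4))/2 + 2(j-i) - 1 if i < j, is a bijection from the set of pairs of positive integers onto the positive integers. -/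
/-!
On the anti-diagonal `i + j = s` the doubled value `2 E(i,j)` equals `s(s-1) + 4 - 4j` when
`j ≤ i` and `s(s-1) + 2 - 4i` when `i < j`, so `E` fills the block `(T(s-2), T(s-1)]` between
consecutive triangular numbers: even distances below the top for `j ≤ i`, odd ones for `i < j`.
Blocks of different diagonals are disjoint, and within a block the distance determines the
position, which gives injectivity. Surjectivity: the successor of every value is again a value,
namely at `(j, i)`, `(j - 1, i + 1)` or, after the end `(i, 1)` of a diagonal, at the centre of
the next one.
-/

/-- The center-to-edges diagonal enumeration:
`E(i,j) = (i(i+1) + (j-1)(2i+j-4))/2` if `i ≥ j`, and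
`E(i,j) = (i(i+1) + (j-1)(2i+j-4))/2 + 2(j-i) - 1` if `i < j`.
(The numerator is always even, so the division is exact.) -/
def E (i j : ℤ) : ℤ :=
  if j ≤ i then (i * (i + 1) + (j - 1) * (2 * i + j - 4)) / 2
  else (i * (i + 1) + (j - 1) * (2 * i + j - 4)) / 2 + 2 * (j - i) - 1

lemma two_mul_numerator_ediv_two (i j : ℤ) :
    2 * ((i * (i + 1) + (j - 1) * (2 * i + j - 4)) / 2) = (i + j) * (i + j - 1) + 4 - 4 * j := by
  have hnum : i * (i + 1) + (j - 1) * (2 * i + j - 4) = (i + j) * (i + j - 1) + 4 - 4 * j := by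
    ring
  have heven : Even ((i + j) * (i + j - 1) + 4 - 4 * j) := by
    rw [show (i + j) * (i + j - 1) + 4 - 4 * j = (i + j) * (i + j - 1) + 2 * (2 - 2 * j) by ring]
    exact (Int.even_mul_pred_self _).add (even_two_mul _)
  rw [hnum, Int.mul_ediv_cancel' heven.two_dvd]

lemma two_mul_E_of_le {i j : ℤ} (h : j ≤ i) :
    2 * E i j = (i + j) * (i + j - 1) + 4 - 4 * j := by
  rw [E, if_pos h, two_mul_numerator_ediv_two]

lemma two_mul_E_of_lt {i j : ℤ} (h : i < j) :
    2 * E i j = (i + j) * (i + j - 1) + 2 - 4 * i := by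
  rw [E, if_neg h.not_ge, mul_sub, mul_add, two_mul_numerator_ediv_two]
  ring

lemma two_mul_E_mem_Ioc {i j : ℤ} (hi : 0 < i) (hj : 0 < j) :
    2 * E i j ∈ Set.Ioc ((i + j - 1) * (i + j - 2)) ((i + j) * (i + j - 1)) := by
  rcases le_or_gt j i with h | h
  · rw [two_mul_E_of_le h]
    constructor <;> nlinarith
  · rw [two_mul_E_of_lt h]
    constructor <;> nlinarith

lemma E_pos {i j : ℤ} (hi : 0 < i) (hj : 0 < j) : 0 < E i j := by
  have := (two_mul_E_mem_Ioc hi hj).1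
  nlinarith

lemma add_eq_add_of_E_eq {i j i' j' : ℤ} (hi : 0 < i) (hj : 0 < j) (hi' : 0 < i')
    (hj' : 0 < j') (h : E i j = E i' j') : i + j = i' + j' := by
  obtain ⟨hlo, hhi⟩ := two_mul_E_mem_Ioc hi hj
  obtain ⟨hlo', hhi'⟩ := two_mul_E_mem_Ioc hi' hj'
  by_contra hne
  rcases lt_or_gt_of_ne hne with hlt | hlt <;> nlinarith

lemma eq_and_eq_of_E_eq {i j i' j' : ℤ} (hi : 0 < i) (hj : 0 < j) (hi' : 0 < i') (hj' : 0 < j')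
    (h : E i j = E i' j') : i = i' ∧ j = j' := by
  have hs := add_eq_add_of_E_eq hi hj hi' hj' h
  replace h : 2 * E i j = 2 * E i' j' := congrArg (2 * ·) h
  rcases le_or_gt j i with hc | hc <;> rcases le_or_gt j' i' with hc' | hc' <;>
    simp only [two_mul_E_of_le, two_mul_E_of_lt, hc, hc', hs] at h <;> omega

lemma exists_E_eq_E_add_one {i j : ℤ} (hi : 0 < i) (hj : 0 < j) :
    ∃ i' j', 0 < i' ∧ 0 < j' ∧ E i' j' = E i j + 1 := by
  suffices ∃ i' j', 0 < i' ∧ 0 < j' ∧ 2 * E i' j' = 2 * E i j + 2 from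
    let ⟨i', j', hi', hj', h⟩ := this; ⟨i', j', hi', hj', by linarith⟩
  rcases lt_or_ge i j with hij | hij
  · refine ⟨j, i, hj, hi, ?_⟩
    rw [two_mul_E_of_le hij.le, two_mul_E_of_lt hij]
    ring
  rcases lt_or_ge 1 j with hj1 | hj1
  · refine ⟨j - 1, i + 1, by omega, by omega, ?_⟩
    rw [two_mul_E_of_lt (by omega), two_mul_E_of_le hij]
    ring
  obtain rfl : j = 1 := by omega
  rw [two_mul_E_of_le hij]
  rcases Int.even_or_odd' i with ⟨k, rfl | rfl⟩
  · refine ⟨k + 1, k + 1, by omega, by omega, ?_⟩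
    rw [two_mul_E_of_le le_rfl]
    ring
  · refine ⟨k + 1, k + 2, by omega, by omega, ?_⟩
    rw [two_mul_E_of_lt (by omega)]
    ring

/-- `E` is a bijection from the set of pairs of positive integers onto the positive
integers. -/
theorem center_to_edges_bijOn :
    Set.BijOn (fun p : ℤ × ℤ => E p.1 p.2)
      {p : ℤ × ℤ | 0 < p.1 ∧ 0 < p.2} {n : ℤ | 0 < n} := by
  refine ⟨fun p hp => E_pos hp.1 hp.2, ?_, ?_⟩
  · rintro ⟨i, j⟩ ⟨hi, hj⟩ ⟨i', j'⟩ ⟨hi', hj'⟩ h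
    obtain ⟨rfl, rfl⟩ := eq_and_eq_of_E_eq hi hj hi' hj' h
    rfl
  · intro n hn
    induction n, (hn : 1 ≤ n) using Int.leInduction with
    | base => exact ⟨(1, 1), ⟨one_pos, one_pos⟩, by decide⟩
    | succ n _ ih =>
      obtain ⟨⟨i, j⟩, ⟨hi, hj⟩, rfl⟩ := ih
      obtain ⟨i', j', hi', hj', h⟩ := exists_E_eq_E_add_one hi hj
      exact ⟨(i', j'), ⟨hi', hj'⟩, h⟩
end

section
/- The edges-to-center diagonal enumeration G : ℤ⁺ × ℤ⁺ → ℤ⁺ defined by G(i,j) = i(2i-1) + (j-i)(3i+j-3)/2 if i ≤ j, and G(i,j) = j(2j-1) + (i-j)(3j+i-3)/2 + 1 if i > j, is a bijection from the set of pairs of positive integers onto the positive integers. -/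
/-- The edges-to-center diagonal enumeration:
`G(i,j) = i(2i-1) + (j-i)(3i+j-3)/2` if `i ≤ j`, and
`G(i,j) = j(2j-1) + (i-j)(3j+i-3)/2 + 1` if `i > j`.
(The products being divided are always even, so the divisions are exact.) -/
def G (i j : ℤ) : ℤ :=
  if i ≤ j then i * (2 * i - 1) + (j - i) * (3 * i + j - 3) / 2
  else j * (2 * j - 1) + (i - j) * (3 * j + i - 3) / 2 + 1

/-- Twice `G i j` has a division-free closed form: with `d = i + j`,
`2 * G i j = d² + i - 3j` if `i ≤ j`, and `d² + j - 3i + 2` otherwise. -/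
lemma two_G (i j : ℤ) :
    2 * G i j = if i ≤ j then (i + j) * (i + j) + i - 3 * j
      else (i + j) * (i + j) + j - 3 * i + 2 := by
  unfold G
  split
  · have h : (2 : ℤ) ∣ (j - i) * (3 * i + j - 3) := by
      rcases Int.even_or_odd (j - i) with h2 | h2
      · exact Dvd.dvd.mul_right h2.two_dvd _
      · refine Dvd.dvd.mul_left ?_ _
        have : Even (3 * i + j - 3) := by
          rcases h2 with ⟨k, hk⟩
          exact ⟨2 * i + k - 1, by omega⟩
        exact this.two_dvd
    obtain ⟨c, hc⟩ := h
    rw [hc, Int.mul_ediv_cancel_left _ (by norm_num)]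
    linear_combination -hc
  · have h : (2 : ℤ) ∣ (i - j) * (3 * j + i - 3) := by
      rcases Int.even_or_odd (i - j) with h2 | h2
      · exact Dvd.dvd.mul_right h2.two_dvd _
      · refine Dvd.dvd.mul_left ?_ _
        have : Even (3 * j + i - 3) := by
          rcases h2 with ⟨k, hk⟩
          exact ⟨2 * j + k - 1, by omega⟩
        exact this.two_dvd
    obtain ⟨c, hc⟩ := h
    rw [hc, Int.mul_ediv_cancel_left _ (by norm_num)]
    linear_combination -hc

/-- Every positive integer is attained by `G` on positive pairs: induction using an
explicit "successor" step within and between anti-diagonals. -/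
lemma surj_aux : ∀ n : ℕ, ∃ i j : ℤ, 0 < i ∧ 0 < j ∧ G i j = (n : ℤ) + 1 := by
  intro n
  induction n with
  | zero =>
    refine ⟨1, 1, one_pos, one_pos, ?_⟩
    have h := two_G 1 1
    rw [if_pos le_rfl] at h
    push_cast
    linarith
  | succ n ih =>
    obtain ⟨i, j, hi, hj, hG⟩ := ih
    rcases lt_trichotomy i j with h | h | h
    · refine ⟨j, i, hj, hi, ?_⟩
      have h1 := two_G i j; rw [if_pos h.le] at h1
      have h2 := two_G j i; rw [if_neg (by omega)] at h2
      push_cast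
      linarith
    · refine ⟨1, i + j, one_pos, by omega, ?_⟩
      have h1 := two_G i j; rw [if_pos h.le] at h1
      have h2 := two_G 1 (i + j); rw [if_pos (by omega)] at h2
      push_cast
      nlinarith [h, hG]
    · rcases eq_or_lt_of_le (by omega : j + 1 ≤ i) with h' | h'
      · refine ⟨1, i + j, one_pos, by omega, ?_⟩
        have h1 := two_G i j; rw [if_neg (by omega)] at h1
        have h2 := two_G 1 (i + j); rw [if_pos (by omega)] at h2
        push_cast
        nlinarith [hG]
      · refine ⟨j + 1, i - 1, by omega, by omega, ?_⟩
        have h1 := two_G i j; rw [if_neg (by omega)] at h1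
        have h2 := two_G (j + 1) (i - 1); rw [if_pos (by omega)] at h2
        push_cast
        nlinarith [hG]

/-- `G` is a bijection from the set of pairs of positive integers onto the positive
integers. -/
theorem edges_to_center_bijOn :
    Set.BijOn (fun p : ℤ × ℤ => G p.1 p.2)
      {p : ℤ × ℤ | 0 < p.1 ∧ 0 < p.2} {n : ℤ | 0 < n} := by
  refine ⟨?_, ?_, ?_⟩
  · rintro ⟨i, j⟩ ⟨hi, hj⟩
    simp only [Set.mem_setOf_eq] at hi hj ⊢
    have h := two_G i j
    split at h <;> nlinarith [sq_nonneg (i + j - 2)]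
  · rintro ⟨i, j⟩ ⟨hi, hj⟩ ⟨k, l⟩ ⟨hk, hl⟩ heq
    simp only [Set.mem_setOf_eq] at hi hj hk hl
    simp only at heq
    have h1 := two_G i j
    have h2 := two_G k l
    have E : (if i ≤ j then (i + j) * (i + j) + i - 3 * j
        else (i + j) * (i + j) + j - 3 * i + 2)
        = (if k ≤ l then (k + l) * (k + l) + k - 3 * l
        else (k + l) * (k + l) + l - 3 * k + 2) := by
      rw [← h1, ← h2, heq]
    have hd : i + j = k + l := by
      rcases lt_trichotomy (i + j) (k + l) with h | h | h
      · exfalso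
        split at E <;> split at E <;> nlinarith [h]
      · exact h
      · exfalso
        split at E <;> split at E <;> nlinarith [h]
    rw [hd] at E
    generalize (k + l) * (k + l) = m at E
    simp only [Prod.mk.injEq]
    split at E <;> split at E <;> exact ⟨by omega, by omega⟩
  · rintro n hn
    simp only [Set.mem_setOf_eq] at hn
    obtain ⟨i, j, hi, hj, hG⟩ := surj_aux (n - 1).toNat
    refine ⟨(i, j), ⟨hi, hj⟩, ?_⟩
    simp only
    rw [hG]
    omega
end

section
/- The alternating edges-to-center diagonal enumeration H : ℤ⁺ × ℤ⁺ → ℤ⁺ defined by H(i,j) = ½·((i+j-1)(i+j-2) + ((-1)^(max{i,j}) + 1)·i - ((-1)^(max{i,j}) - 1)·j) is a bijection from the set of pairs of positive integers onto the positive integers. -/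
/-- The alternating edges-to-center diagonal enumeration
`H(i,j) = ½·((i+j-1)(i+j-2) + ((-1)^(max{i,j}) + 1)·i - ((-1)^(max{i,j}) - 1)·j)`.
(For positive `i, j` the exponent `max{i,j}` is positive, so `(max i j).toNat = max i j`,
and the numerator is even, so the division is exact.) -/
def H (i j : ℤ) : ℤ :=
  ((i + j - 1) * (i + j - 2) + ((-1) ^ (max i j).toNat + 1) * i -
    ((-1) ^ (max i j).toNat - 1) * j) / 2

lemma even_prod (m : ℤ) : (2:ℤ) ∣ (m - 1) * (m - 2) := by
  have h := Int.even_mul_succ_self (m - 2)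
  have he : (m - 2) * (m - 2 + 1) = (m - 1) * (m - 2) := by ring
  rw [he] at h
  exact h.two_dvd

lemma two_H (i j : ℤ) (hi : 0 < i) (hj : 0 < j) :
    2 * H i j = (i + j - 1) * (i + j - 2) + 2 * (if Even (max i j) then i else j) := by
  have hm : (0:ℤ) ≤ max i j := le_max_of_le_left hi.le
  have hcast : ((max i j).toNat : ℤ) = max i j := Int.toNat_of_nonneg hm
  have hev : Even ((max i j).toNat) ↔ Even (max i j) := by
    have h := (Int.even_coe_nat ((max i j).toNat)).symm
    rwa [hcast] at h
  unfold H
  by_cases h : Even (max i j)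
  · have h1 : ((-1:ℤ)) ^ (max i j).toNat = 1 := (hev.mpr h).neg_one_pow
    rw [h1, if_pos h, Int.mul_ediv_cancel']
    · ring
    · have := even_prod (i + j)
      obtain ⟨t, ht⟩ := this
      exact ⟨t + i, by linarith [ht]⟩
  · have h1 : ((-1:ℤ)) ^ (max i j).toNat = -1 := by
      have : Odd ((max i j).toNat) := by
        rcases Nat.even_or_odd (max i j).toNat with he | ho
        · exact absurd (hev.mp he) h
        · exact ho
      exact this.neg_one_pow
    rw [h1, if_neg h, Int.mul_ediv_cancel']
    · ring
    · obtain ⟨t, ht⟩ := even_prod (i + j)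
      exact ⟨t + j, by linarith [ht]⟩

lemma n_recover {n1 n2 c1 c2 : ℤ} (h1 : 2 ≤ n1) (h2 : 2 ≤ n2)
    (hc1 : 1 ≤ c1) (hc1' : c1 ≤ n1 - 1) (hc2 : 1 ≤ c2) (hc2' : c2 ≤ n2 - 1)
    (heq : (n1 - 1) * (n1 - 2) + 2 * c1 = (n2 - 1) * (n2 - 2) + 2 * c2) : n1 = n2 := by
  rcases lt_trichotomy n1 n2 with h | h | h
  · nlinarith
  · exact h
  · nlinarith

lemma exists_n : ∀ k : ℤ, 1 ≤ k →
    ∃ n : ℤ, 2 ≤ n ∧ (n - 1) * (n - 2) < 2 * k ∧ 2 * k ≤ n * (n - 1) := by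
  refine Int.le_induction ?_ ?_
  · exact ⟨2, by norm_num⟩
  · rintro k hk ⟨n, hn2, hl, hu⟩
    by_cases h : 2 * (k + 1) ≤ n * (n - 1)
    · exact ⟨n, hn2, by linarith, h⟩
    · exact ⟨n + 1, by linarith, by nlinarith, by nlinarith⟩

/-- `H` is a bijection from the set of pairs of positive integers onto the positive
integers. -/
theorem alternating_edges_to_center_bijOn :
    Set.BijOn (fun p : ℤ × ℤ => H p.1 p.2)
      {p : ℤ × ℤ | 0 < p.1 ∧ 0 < p.2} {n : ℤ | 0 < n} := by
  refine ⟨?_, ?_, ?_⟩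
  · rintro ⟨i, j⟩ ⟨hi, hj⟩
    have h2 := two_H i j hi hj
    simp only [Set.mem_setOf_eq]
    by_cases h : Even (max i j) <;> simp [h] at h2 <;> nlinarith [h2]
  · rintro ⟨i1, j1⟩ ⟨hi1, hj1⟩ ⟨i2, j2⟩ ⟨hi2, hj2⟩ heq
    simp only at heq
    have h1 := two_H i1 j1 hi1 hj1
    have h2 := two_H i2 j2 hi2 hj2
    set c1 := if Even (max i1 j1) then i1 else j1 with hc1def
    set c2 := if Even (max i2 j2) then i2 else j2 with hc2def
    have hc1 : 1 ≤ c1 ∧ c1 ≤ i1 + j1 - 1 := by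
      rw [hc1def]; split <;> constructor <;> linarith
    have hc2 : 1 ≤ c2 ∧ c2 ≤ i2 + j2 - 1 := by
      rw [hc2def]; split <;> constructor <;> linarith
    have hn : i1 + j1 = i2 + j2 := by
      refine n_recover (n1 := i1 + j1) (n2 := i2 + j2) (by linarith) (by linarith)
        hc1.1 hc1.2 hc2.1 hc2.2 ?_
      have : H i1 j1 = H i2 j2 := heq
      nlinarith [h1, h2, this]
    have hc : c1 = c2 := by
      have : H i1 j1 = H i2 j2 := heq
      nlinarith [h1, h2, this, hn]
    -- recover pairs
    have key1 : max i1 j1 = max c1 (i1 + j1 - c1) := by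
      rw [hc1def]; split
      · have : i1 + j1 - i1 = j1 := by ring
        rw [this]
      · have : i1 + j1 - j1 = i1 := by ring
        rw [this, max_comm]
    have key2 : max i2 j2 = max c2 (i2 + j2 - c2) := by
      rw [hc2def]; split
      · have : i2 + j2 - i2 = j2 := by ring
        rw [this]
      · have : i2 + j2 - j2 = i2 := by ring
        rw [this, max_comm]
    have hmax : max i1 j1 = max i2 j2 := by rw [key1, key2, hc, hn]
    by_cases hp : Even (max i1 j1)
    · have hp2 : Even (max i2 j2) := hmax ▸ hp
      have e1 : c1 = i1 := by rw [hc1def, if_pos hp]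
      have e2 : c2 = i2 := by rw [hc2def, if_pos hp2]
      have : i1 = i2 := by rw [← e1, ← e2, hc]
      exact Prod.ext this (by linarith [hn, this])
    · have hp2 : ¬ Even (max i2 j2) := hmax ▸ hp
      have e1 : c1 = j1 := by rw [hc1def, if_neg hp]
      have e2 : c2 = j2 := by rw [hc2def, if_neg hp2]
      have hj : j1 = j2 := by rw [← e1, ← e2, hc]
      exact Prod.ext (by linarith [hn, hj]) hj
  · rintro k hk
    simp only [Set.mem_setOf_eq] at hk
    obtain ⟨n, hn2, hl, hu⟩ := exists_n k hk
    have hdvd : (2:ℤ) ∣ (n - 1) * (n - 2) := even_prod n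
    set c := k - (n - 1) * (n - 2) / 2 with hcdef
    have h2c : 2 * c = 2 * k - (n - 1) * (n - 2) := by
      rw [hcdef]; rw [mul_sub, Int.mul_ediv_cancel' hdvd]
    have hc1 : 1 ≤ c := by nlinarith [h2c]
    have hc2 : c ≤ n - 1 := by nlinarith [h2c]
    by_cases hp : Even (max c (n - c))
    · refine ⟨(c, n - c), ⟨show (0:ℤ) < c by linarith, show (0:ℤ) < n - c by linarith⟩, ?_⟩
      have h2 := two_H c (n - c) (by linarith) (by linarith)
      have hs : c + (n - c) = n := by ring
      rw [hs] at h2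
      rw [if_pos hp] at h2
      simp only
      linarith [h2, h2c]
    · refine ⟨(n - c, c), ⟨show (0:ℤ) < n - c by linarith, show (0:ℤ) < c by linarith⟩, ?_⟩
      have h2 := two_H (n - c) c (by linarith) (by linarith)
      have hs : (n - c) + c = n := by ring
      rw [hs] at h2
      rw [max_comm (n-c) c, if_neg hp] at h2
      simp only
      linarith [h2, h2c]
end

section
/- For every positive integer n, setting t = ⌊√(n-1)⌋ + 1 (real square root, floor), the numbers i = min{t, n - (t-1)²} and j = min{t, t² - n + 1} are positive integers satisfying A(i,j) = n; moreover these are the unique positive integers with A(i,j) = n. -/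
/-- The angle (boxed/shell) enumeration:
`A(i,j) = i² - j + 1` if `i ≥ j`, and `A(i,j) = (j-1)² + i` if `i < j`. -/
def A (i j : ℤ) : ℤ := if j ≤ i then i ^ 2 - j + 1 else (j - 1) ^ 2 + i

/-- Uniqueness of the shell index. -/
lemma sq_shell_unique {t u n : ℤ} (ht : 1 ≤ t) (hu : 1 ≤ u)
    (h1 : (t - 1) ^ 2 < n) (h2 : n ≤ t ^ 2)
    (h3 : (u - 1) ^ 2 < n) (h4 : n ≤ u ^ 2) : u = t := by
  rcases lt_trichotomy u t with h | h | h
  · exfalso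
    have hm : (0:ℤ) ≤ (t - 1 - u) * (t - 1 + u) :=
      mul_nonneg (by omega) (by omega)
    nlinarith
  · exact h
  · exfalso
    have hm : (0:ℤ) ≤ (u - 1 - t) * (u - 1 + t) :=
      mul_nonneg (by omega) (by omega)
    nlinarith

/-- For every positive integer `n`, with `t = ⌊√(n-1)⌋ + 1`, the numbers
`i = min{t, n - (t-1)²}` and `j = min{t, t² - n + 1}` are positive integers satisfying
`A(i,j) = n`, and they are the unique such positive integers. -/
theorem angle_enumeration_inverse (n : ℤ) (hn : 0 < n) :
    let t : ℤ := ⌊Real.sqrt ((n : ℝ) - 1)⌋ + 1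
    let i : ℤ := min t (n - (t - 1) ^ 2)
    let j : ℤ := min t (t ^ 2 - n + 1)
    0 < i ∧ 0 < j ∧ A i j = n ∧
      ∀ i' j' : ℤ, 0 < i' → 0 < j' → A i' j' = n → i' = i ∧ j' = j := by
  intro t i j
  have hidef : i = min t (n - (t - 1) ^ 2) := rfl
  have hjdef : j = min t (t ^ 2 - n + 1) := rfl
  have htdef : t = ⌊Real.sqrt ((n : ℝ) - 1)⌋ + 1 := rfl
  set s : ℤ := ⌊Real.sqrt ((n : ℝ) - 1)⌋ with hs
  have hn1 : (0:ℝ) ≤ (n:ℝ) - 1 := by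
    have : (1:ℝ) ≤ (n:ℝ) := by exact_mod_cast hn
    linarith
  have hs0 : 0 ≤ s := Int.floor_nonneg.mpr (Real.sqrt_nonneg _)
  have hs0' : (0:ℝ) ≤ (s:ℝ) := by exact_mod_cast hs0
  have hsle : (s:ℝ) ≤ Real.sqrt ((n:ℝ)-1) := Int.floor_le _
  have hslt : Real.sqrt ((n:ℝ)-1) < (s:ℝ) + 1 := Int.lt_floor_add_one _
  have hsq := Real.sq_sqrt hn1
  have hsnn := Real.sqrt_nonneg ((n:ℝ)-1)
  have h1 : s ^ 2 ≤ n - 1 := by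
    have hmm : (s:ℝ) * (s:ℝ) ≤ Real.sqrt ((n:ℝ)-1) * Real.sqrt ((n:ℝ)-1) :=
      mul_le_mul hsle hsle hs0' hsnn
    have h : (s:ℝ) ^ 2 ≤ (n:ℝ) - 1 := by nlinarith
    exact_mod_cast h
  have h2 : n - 1 < (s + 1) ^ 2 := by
    have hmm : Real.sqrt ((n:ℝ)-1) * Real.sqrt ((n:ℝ)-1) ≤
        ((s:ℝ) + 1) * ((s:ℝ) + 1) :=
      mul_le_mul (le_of_lt hslt) (le_of_lt hslt) hsnn (by linarith)
    have h : ((n:ℝ) - 1) < ((s:ℝ) + 1) ^ 2 := by nlinarith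
    exact_mod_cast h
  have ht1 : (t - 1) ^ 2 < n := by rw [htdef]; simpa using by linarith
  have ht2 : n ≤ t ^ 2 := by rw [htdef]; linarith
  have htpos : 1 ≤ t := by rw [htdef]; linarith
  have et : (t - 1) ^ 2 = t ^ 2 - 2 * t + 1 := by ring
  clear hn1 hs0 hs0' hsle hslt hsq hsnn h1 h2 hs
  rcases le_or_gt (t ^ 2 - t + 1) n with hc | hc
  · have hi : i = t := by
      rw [hidef]; apply min_eq_left; linarith
    have hj : j = t ^ 2 - n + 1 := by
      rw [hjdef]; apply min_eq_right; linarith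
    refine ⟨by omega, by omega, ?_, ?_⟩
    · rw [hi, hj]; unfold A; rw [if_pos (by linarith)]; ring
    · intro i' j' hi' hj' hA
      unfold A at hA
      split_ifs at hA with h
      · have ei : (i' - 1) ^ 2 = i' ^ 2 - 2 * i' + 1 := by ring
        have hie : i' = t :=
          sq_shell_unique htpos (by omega) ht1 ht2 (by linarith) (by linarith)
        subst hie
        exact ⟨hi.symm, by rw [hj]; linarith⟩
      · exfalso
        push_neg at h
        have ej : (j' - 1) ^ 2 = j' ^ 2 - 2 * j' + 1 := by ring
        have hje : j' = t :=
          sq_shell_unique htpos (by omega) ht1 ht2 (by linarith) (by linarith)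
        subst hje
        linarith
  · have hi : i = n - (t - 1) ^ 2 := by
      rw [hidef]; apply min_eq_right; linarith
    have hj : j = t := by
      rw [hjdef]; apply min_eq_left; linarith
    refine ⟨by omega, by omega, ?_, ?_⟩
    · rw [hi, hj]; unfold A; rw [if_neg (by intro hh; linarith)]; ring
    · intro i' j' hi' hj' hA
      unfold A at hA
      split_ifs at hA with h
      · exfalso
        have ei : (i' - 1) ^ 2 = i' ^ 2 - 2 * i' + 1 := by ring
        have hie : i' = t :=
          sq_shell_unique htpos (by omega) ht1 ht2 (by linarith) (by linarith)
        subst hie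
        linarith
      · push_neg at h
        have ej : (j' - 1) ^ 2 = j' ^ 2 - 2 * j' + 1 := by ring
        have hje : j' = t :=
          sq_shell_unique htpos (by omega) ht1 ht2 (by linarith) (by linarith)
        subst hje
        exact ⟨by rw [hi]; linarith, hj.symm⟩
end

section
/- Let k be a nonnegative integer. For all positive integers i, j, setting n = A(i,j), s = ⌊√(n-1)⌋ and t = n - s² - s - 1 (an integer which may be negative), one has i + kj - k = (k+1)·(s - (|t| + t)/2) + t + 1. -/
lemma floor_sqrt_eq (a m : ℤ) (ha : 0 ≤ a) (h1 : a ^ 2 ≤ m) (h2 : m < (a + 1) ^ 2) :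
    ⌊Real.sqrt (m : ℝ)⌋ = a := by
  have ha' : (0 : ℝ) ≤ (a : ℝ) := by exact_mod_cast ha
  rw [Int.floor_eq_iff]
  constructor
  · have hm : (0:ℝ) ≤ (m:ℝ) := by exact_mod_cast (by nlinarith : (0:ℤ) ≤ m)
    rw [Real.le_sqrt ha' hm]
    exact_mod_cast h1
  · rw [Real.sqrt_lt' (by positivity)]
    exact_mod_cast h2

/-- For a nonnegative integer `k` and positive integers `i, j`, with `n = A(i,j)`,
`s = ⌊√(n-1)⌋` and `t = n - s ^ 2 - s - 1`, one has
`i + kj - k = (k+1)·(s - (|t| + t)/2) + t + 1`.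
(`|t| + t` is even and nonnegative, so the division is exact.) -/
theorem angle_shifted_columns_index_formula (k : ℤ) (hk : 0 ≤ k)
    (i j : ℤ) (hi : 0 < i) (hj : 0 < j) :
    let n : ℤ := A i j
    let s : ℤ := ⌊Real.sqrt ((n : ℝ) - 1)⌋
    let t : ℤ := n - s ^ 2 - s - 1
    i + k * j - k = (k + 1) * (s - (|t| + t) / 2) + t + 1 := by
  intro n s t
  unfold t s n
  unfold A
  split_ifs with h
  · -- j ≤ i
    have hs : ⌊Real.sqrt (((i ^ 2 - j + 1 : ℤ) : ℝ) - 1)⌋ = i - 1 := by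
      have : (((i ^ 2 - j + 1 : ℤ) : ℝ) - 1) = ((i ^ 2 - j : ℤ) : ℝ) := by push_cast; ring
      rw [this]
      exact floor_sqrt_eq (i - 1) _ (by omega) (by nlinarith) (by nlinarith)
    rw [hs]
    have ht : i ^ 2 - j + 1 - (i - 1) ^ 2 - (i - 1) - 1 = i - j := by ring
    rw [ht]
    have habs : |i - j| = i - j := abs_of_nonneg (by omega)
    rw [habs]
    have : (i - j + (i - j)) / 2 = i - j := by omega
    rw [this]
    ring
  · -- i < j
    have hs : ⌊Real.sqrt ((((j - 1) ^ 2 + i : ℤ) : ℝ) - 1)⌋ = j - 1 := by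
      have : ((((j - 1) ^ 2 + i : ℤ) : ℝ) - 1) = (((j - 1) ^ 2 + i - 1 : ℤ) : ℝ) := by
        push_cast; ring
      rw [this]
      exact floor_sqrt_eq (j - 1) _ (by omega) (by nlinarith) (by nlinarith [not_le.mp h])
    rw [hs]
    have ht : (j - 1) ^ 2 + i - (j - 1) ^ 2 - (j - 1) - 1 = i - j := by ring
    rw [ht]
    have habs : |i - j| = j - i := by rw [abs_of_neg (by omega : i - j < 0)]; ring
    rw [habs]
    have : (j - i + (i - j)) / 2 = 0 := by omega
    rw [this]
    ring
end

section
/- Let k be a positive integer. For all positive integers i, j, setting n = A(i,j) and s = ⌊√(n-1)⌋, one has max{ki + j - k, i + kj - k} = (k+1)·s + 1 - |n - s² - s - 1|. -/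
/-- For a positive integer `k` and positive integers `i, j`, with `n = A(i,j)` and
`s = ⌊√(n-1)⌋`, one has `max{ki+j-k, i+kj-k} = (k+1)·s + 1 - |n - s² - s - 1|`. -/
theorem angle_max_index_formula (k : ℤ) (hk : 0 < k)
    (i j : ℤ) (hi : 0 < i) (hj : 0 < j) :
    let n : ℤ := A i j
    let s : ℤ := ⌊Real.sqrt ((n : ℝ) - 1)⌋
    max (k * i + j - k) (i + k * j - k) = (k + 1) * s + 1 - |n - s ^ 2 - s - 1| := by
  intro n s
  rcases le_or_gt j i with hji | hij
  · have hn : n = i ^ 2 - j + 1 := by simp [n, A, hji]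
    have hs : s = i - 1 := by
      have : ((n : ℝ) - 1) = ((n - 1 : ℤ) : ℝ) := by push_cast; ring
      rw [show s = ⌊Real.sqrt ((n : ℝ) - 1)⌋ from rfl, this]
      exact floor_sqrt_eq (i - 1) (n - 1) (by omega) (by nlinarith) (by nlinarith)
    rw [hs, hn]
    have habs : |i ^ 2 - j + 1 - (i - 1) ^ 2 - (i - 1) - 1| = i - j := by
      rw [abs_of_nonneg (by nlinarith)]; ring
    rw [habs, max_eq_left (by nlinarith)]
    ring
  · have hn : n = (j - 1) ^ 2 + i := by simp [n, A, not_le.mpr hij]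
    have hs : s = j - 1 := by
      have : ((n : ℝ) - 1) = ((n - 1 : ℤ) : ℝ) := by push_cast; ring
      rw [show s = ⌊Real.sqrt ((n : ℝ) - 1)⌋ from rfl, this]
      exact floor_sqrt_eq (j - 1) (n - 1) (by omega) (by nlinarith) (by nlinarith)
    rw [hs, hn]
    have habs : |(j - 1) ^ 2 + i - (j - 1) ^ 2 - (j - 1) - 1| = j - i := by
      rw [abs_of_nonpos (by nlinarith)]; ring
    rw [habs, max_eq_right (by nlinarith)]
    ring
end

section
/- For every positive integer n, set t = ⌊√(n-1)⌋ + 1 (real square root, floor). If t is even, then the positive integers i = min{t, n - (t-1)²} and j = min{t, t² - n + 1} satisfy X(i,j) = n, while if t is odd, then i = min{t, t² - n + 1} and j = min{t, n - (t-1)²} satisfy X(i,j) = n. Equivalently, i = Mod(t,2)·min{t, t² - n + 1} + Mod(t+1,2)·min{t, n - (t-1)²} and j = Mod(t,2)·min{t, n - (t-1)²} + Mod(t+1,2)·min{t, t² - n + 1} satisfy X(i,j) = n. -/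
/-- The boustrophedonic (ox-plowing) shell enumeration:
`X(i,j) = (j-1)² + j + (-1)^(j-1)·(j-i)` if `i ≤ j`, and
`X(i,j) = (i-1)² + i - (-1)^(i-1)·(i-j)` if `i > j`. -/
def X (i j : ℤ) : ℤ :=
  if i ≤ j then (j - 1) ^ 2 + j + (-1) ^ (j - 1).toNat * (j - i)
  else (i - 1) ^ 2 + i - (-1) ^ (i - 1).toNat * (i - j)

lemma Xeven (n t : ℤ) (ht : 1 ≤ t) (hpar : Even t) :
    X (min t (n - (t-1)^2)) (min t (t^2 - n + 1)) = n := by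
  have hab : (n - (t-1)^2) + (t^2 - n + 1) = 2 * t := by ring
  have h : ((t-1).toNat : ℤ) = t - 1 := Int.toNat_of_nonneg (by omega)
  have hodd : Odd (t - 1).toNat := by
    rw [← Int.odd_coe_nat, h]
    rcases hpar with ⟨k, hk⟩
    exact ⟨k - 1, by omega⟩
  have hneg : ((-1:ℤ)) ^ (t-1).toNat = -1 := Odd.neg_one_pow hodd
  rcases le_or_gt (n - (t-1)^2) t with h | h
  · rw [min_eq_right h, min_eq_left (by omega : t ≤ t^2 - n + 1)]
    rw [X, if_pos (by omega), hneg]; ring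
  · rw [min_eq_left (by omega), min_eq_right (by omega : t^2 - n + 1 ≤ t)]
    rw [X, if_neg (by omega), hneg]; ring

lemma Xodd (n t : ℤ) (ht : 1 ≤ t) (hpar : Odd t) :
    X (min t (t^2 - n + 1)) (min t (n - (t-1)^2)) = n := by
  have hab : (n - (t-1)^2) + (t^2 - n + 1) = 2 * t := by ring
  have h : ((t-1).toNat : ℤ) = t - 1 := Int.toNat_of_nonneg (by omega)
  have heven : Even (t - 1).toNat := by
    rw [← Int.even_coe_nat, h]
    rcases hpar with ⟨k, hk⟩
    exact ⟨k, by omega⟩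
  have hneg : ((-1:ℤ)) ^ (t-1).toNat = 1 := Even.neg_one_pow heven
  rcases le_or_gt (t^2 - n + 1) t with h | h
  · rw [min_eq_right h, min_eq_left (by omega : t ≤ n - (t-1)^2)]
    rw [X, if_pos (by omega), hneg]; ring
  · rw [min_eq_left (by omega), min_eq_right (by omega : n - (t-1)^2 ≤ t)]
    rw [X, if_neg (by omega), hneg]; ring

/-- For every positive integer `n`, with `t = ⌊√(n-1)⌋ + 1`: if `t` is even then
`i = min{t, n - (t-1)²}`, `j = min{t, t² - n + 1}` are positive integers with
`X(i,j) = n`; if `t` is odd then `i = min{t, t² - n + 1}`, `j = min{t, n - (t-1)²}`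
are positive integers with `X(i,j) = n`; equivalently,
`i = Mod(t,2)·min{t, t² - n + 1} + Mod(t+1,2)·min{t, n - (t-1)²}` and
`j = Mod(t,2)·min{t, n - (t-1)²} + Mod(t+1,2)·min{t, t² - n + 1}`
satisfy `X(i,j) = n`. -/
theorem boustrophedonic_shell_inverse (n : ℤ) (hn : 0 < n) :
    let t : ℤ := ⌊Real.sqrt ((n : ℝ) - 1)⌋ + 1
    (Even t →
      0 < min t (n - (t - 1) ^ 2) ∧ 0 < min t (t ^ 2 - n + 1) ∧
        X (min t (n - (t - 1) ^ 2)) (min t (t ^ 2 - n + 1)) = n) ∧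
    (Odd t →
      0 < min t (t ^ 2 - n + 1) ∧ 0 < min t (n - (t - 1) ^ 2) ∧
        X (min t (t ^ 2 - n + 1)) (min t (n - (t - 1) ^ 2)) = n) ∧
    X (t % 2 * min t (t ^ 2 - n + 1) + (t + 1) % 2 * min t (n - (t - 1) ^ 2))
      (t % 2 * min t (n - (t - 1) ^ 2) + (t + 1) % 2 * min t (t ^ 2 - n + 1)) = n := by
  intro t
  have htdef : t = ⌊Real.sqrt ((n : ℝ) - 1)⌋ + 1 := rfl
  have h0 : (0:ℝ) ≤ (n:ℝ) - 1 := by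
    have : (1:ℝ) ≤ (n:ℝ) := by exact_mod_cast hn
    linarith
  have hf0 : 0 ≤ ⌊Real.sqrt ((n : ℝ) - 1)⌋ := Int.floor_nonneg.mpr (Real.sqrt_nonneg _)
  have ht1 : 1 ≤ t := by omega
  have htf : ((t:ℝ) - 1) = ((⌊Real.sqrt ((n : ℝ) - 1)⌋ : ℤ) : ℝ) := by
    rw [htdef]; push_cast; ring
  have hlow : ((t:ℝ) - 1)^2 ≤ (n:ℝ) - 1 := by
    have hle : ((⌊Real.sqrt ((n : ℝ) - 1)⌋ : ℤ) : ℝ) ≤ Real.sqrt ((n:ℝ)-1) :=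
      Int.floor_le _
    rw [htf]
    nlinarith [Real.sq_sqrt h0, Real.sqrt_nonneg ((n:ℝ)-1),
      (by exact_mod_cast hf0 : (0:ℝ) ≤ ((⌊Real.sqrt ((n : ℝ) - 1)⌋ : ℤ) : ℝ))]
  have hhigh : (n:ℝ) - 1 < (t:ℝ)^2 := by
    have hlt : Real.sqrt ((n:ℝ)-1) < ((⌊Real.sqrt ((n : ℝ) - 1)⌋ : ℤ) : ℝ) + 1 :=
      Int.lt_floor_add_one _
    have : Real.sqrt ((n:ℝ)-1) < (t:ℝ) := by rw [← htf] at hlt; linarith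
    nlinarith [Real.sq_sqrt h0, Real.sqrt_nonneg ((n:ℝ)-1)]
  have h1 : (t - 1)^2 < n := by
    have : (((t-1)^2 : ℤ) : ℝ) < (n:ℝ) := by push_cast; nlinarith
    exact_mod_cast this
  have h2 : n ≤ t^2 := by
    have : ((n - 1 : ℤ) : ℝ) < ((t^2 : ℤ) : ℝ) := by push_cast; nlinarith
    have := (by exact_mod_cast this : n - 1 < t^2)
    omega
  refine ⟨fun hp => ⟨?_, ?_, Xeven n t ht1 hp⟩,
    fun hp => ⟨?_, ?_, Xodd n t ht1 hp⟩, ?_⟩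
  · rw [lt_min_iff]; exact ⟨by linarith, by linarith⟩
  · rw [lt_min_iff]; exact ⟨by linarith, by linarith⟩
  · rw [lt_min_iff]; exact ⟨by linarith, by linarith⟩
  · rw [lt_min_iff]; exact ⟨by linarith, by linarith⟩
  · rcases Int.even_or_odd t with hp | hp
    · have hm : t % 2 = 0 := Int.even_iff.mp hp
      have hm1 : (t + 1) % 2 = 1 := by omega
      rw [hm, hm1]
      simpa using Xeven n t ht1 hp
    · have hm : t % 2 = 1 := Int.odd_iff.mp hp
      have hm1 : (t + 1) % 2 = 0 := by omega
      rw [hm, hm1]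
      simpa using Xodd n t ht1 hp
end

section
/- Let l and h be positive integers. The map N : ℤ⁺ × ℤ⁺ → ℤ⁺ defined by N(i,j) = (l·h/2)·((R+S)² + 3R + S) + l·(i - h·R - S - 1) + j, where R = ⌊(i-1)/h⌋ and S = ⌊(j-1)/l⌋, is a bijection from the set of pairs of positive integers onto the positive integers. -/
/-- Generalized Cantor diagonalization by rectangular blocks of length `l` and height `h`:
`N(i,j) = (l·h/2)·((R+S)² + 3R + S) + l·(i - h·R - S - 1) + j`, where
`R = ⌊(i-1)/h⌋` and `S = ⌊(j-1)/l⌋`.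
(`(R+S)² + 3R + S` is always even, so multiplying by `l·h/2` is the same as exact
division of the whole product by `2`; for positive `i, j` and positive `l, h` the
integer divisions `(i-1)/h`, `(j-1)/l` compute the floors.) -/
def N (l h i j : ℤ) : ℤ :=
  l * h * (((i - 1) / h + (j - 1) / l) ^ 2 + 3 * ((i - 1) / h) + (j - 1) / l) / 2 +
    l * (i - h * ((i - 1) / h) - (j - 1) / l - 1) + j

/-! Put `a = i - 1`, `b = j - 1`, `R = a / h`, `S = b / l`. Since
`((R + S)² + 3R + S) / 2 = T(R + S) + R` with `T(n) = n(n+1)/2 = (n+1).choose 2`, one has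
`N(i, j) - 1 = l h · c(R, S) + l (a % h) + b % l`, where `c(R, S) = T(R + S) + R` is Cantor's
pairing function. So `N - 1` is the composite of the bijections
`ℕ² ≃ (ℕ × Fin h) × (ℕ × Fin l) ≃ ℕ² × (Fin h × Fin l) ≃ ℕ × Fin (h l) ≃ ℕ`
given by division with remainder, Cantor's pairing together with the mixed-radix numbering of a
rectangle, and division with remainder by `h l` again. Cantor's pairing is itself a bijection
because it maps the anti-diagonal `a + b = d` onto the interval `[T(d), T(d + 1))`. -/

open Function Set

namespace Nat

theorem add_one_choose_two (n : ℕ) : (n + 1).choose 2 = n.choose 2 + n := by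
  rw [choose_succ_succ', choose_one_right, add_comm]

def cantorPair (p : ℕ × ℕ) : ℕ := (p.1 + p.2 + 1).choose 2 + p.1

theorem two_mul_cantorPair (a b : ℕ) :
    2 * cantorPair (a, b) = (a + b) ^ 2 + 3 * a + b := by
  have h := add_one_mul_choose_eq (a + b) 1
  rw [choose_one_right] at h
  rw [cantorPair]
  linarith

theorem cantorPair_lt_of_add_lt {a b c d : ℕ} (h : a + b < c + d) :
    cantorPair (a, b) < cantorPair (c, d) :=
  calc cantorPair (a, b) < (a + b + 2).choose 2 := by
        rw [add_one_choose_two]; exact Nat.add_lt_add_left (by omega) _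
    _ ≤ (c + d + 1).choose 2 := choose_le_choose 2 (by omega)
    _ ≤ cantorPair (c, d) := le_add_right _ _

theorem cantorPair_injective : Injective cantorPair := by
  rintro ⟨a, b⟩ ⟨c, d⟩ h
  have hs : a + b = c + d :=
    le_antisymm (not_lt.1 fun hlt => (cantorPair_lt_of_add_lt hlt).ne' h)
      (not_lt.1 fun hlt => (cantorPair_lt_of_add_lt hlt).ne h)
  simp only [cantorPair, hs, Nat.add_left_cancel_iff] at h
  ext <;> omega

theorem cantorPair_add_one_left (a b : ℕ) :
    cantorPair (a + 1, b) = cantorPair (a, b + 1) + 1 := by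
  simp only [cantorPair, Nat.add_right_comm a 1 b, add_assoc]

theorem cantorPair_zero_add_one (a : ℕ) : cantorPair (0, a + 1) = cantorPair (a, 0) + 1 := by
  simp only [cantorPair, zero_add, add_zero, add_one_choose_two (a + 1)]
  omega

theorem cantorPair_surjective : Surjective cantorPair := by
  intro n
  induction n with
  | zero => exact ⟨(0, 0), rfl⟩
  | succ n ih =>
    obtain ⟨⟨a, b⟩, rfl⟩ := ih
    cases b with
    | zero => exact ⟨(0, a + 1), cantorPair_zero_add_one a⟩
    | succ b => exact ⟨(a + 1, b), cantorPair_add_one_left a b⟩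

theorem cantorPair_bijective : Bijective cantorPair :=
  ⟨cantorPair_injective, cantorPair_surjective⟩

def blockPair (l h : ℕ) (p : ℕ × ℕ) : ℕ :=
  cantorPair (p.1 / h, p.2 / l) * (h * l) + (p.2 % l + l * (p.1 % h))

theorem blockPair_bijective {l h : ℕ} (hl : 0 < l) (hh : 0 < h) : Bijective (blockPair l h) := by
  have : NeZero l := ⟨hl.ne'⟩
  have : NeZero h := ⟨hh.ne'⟩
  let e : ℕ × ℕ ≃ ℕ :=
    ((divModEquiv h).prodCongr (divModEquiv l)).trans <|
      (Equiv.prodProdProdComm _ _ _ _).trans <|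
        ((Equiv.ofBijective _ cantorPair_bijective).prodCongr finProdFinEquiv).trans
          (divModEquiv (h * l)).symm
  convert e.bijective
  ext ⟨a, b⟩
  simp [e, blockPair]

end Nat

namespace Int

theorem bijOn_natCast_add_one : BijOn (fun n : ℕ => (n : ℤ) + 1) univ (Ioi 0) :=
  ⟨fun _ _ => by simp only [mem_Ioi]; omega, fun _ _ _ _ h => by simpa using h,
    fun n hn => ⟨(n - 1).toNat, trivial, by simp only [mem_Ioi] at hn; dsimp only; omega⟩⟩

theorem bijOn_toNat_sub_one : BijOn (fun n : ℤ => (n - 1).toNat) (Ioi 0) univ :=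
  ⟨fun _ _ => trivial, fun _ hm _ hn h => by simp only [mem_Ioi] at hm hn; dsimp only at h; omega,
    fun n _ => ⟨n + 1, by simp only [mem_Ioi]; omega, by simp⟩⟩

end Int

theorem N_natCast_add_one (l h a b : ℕ) :
    N l h (a + 1) (b + 1) = Nat.blockPair l h (a, b) + 1 := by
  have hR : ((a : ℤ) + 1 - 1) / h = ((a / h : ℕ) : ℤ) := by
    rw [add_sub_cancel_right, Int.natCast_ediv]
  have hS : ((b : ℤ) + 1 - 1) / l = ((b / l : ℕ) : ℤ) := by
    rw [add_sub_cancel_right, Int.natCast_ediv]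
  have hC : (((a / h : ℕ) : ℤ) + (b / l : ℕ)) ^ 2 + 3 * (a / h : ℕ) + (b / l : ℕ) =
      2 * (Nat.cantorPair (a / h, b / l) : ℤ) := by
    exact_mod_cast (Nat.two_mul_cantorPair (a / h) (b / l)).symm
  have ha : (a : ℤ) = h * (a / h : ℕ) + (a % h : ℕ) := by
    exact_mod_cast (Nat.div_add_mod a h).symm
  have hb : (b : ℤ) = l * (b / l : ℕ) + (b % l : ℕ) := by
    exact_mod_cast (Nat.div_add_mod b l).symm
  rw [N, hR, hS, hC, mul_left_comm, Int.mul_ediv_cancel_left _ two_ne_zero, Nat.blockPair]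
  push_cast at ha hb ⊢
  linear_combination l * ha + hb

/-- For positive integers `l` and `h`, the map `N` is a bijection from the set of pairs
of positive integers onto the positive integers. -/
theorem rectangle_enumeration_bijOn (l h : ℤ) (hl : 0 < l) (hh : 0 < h) :
    Set.BijOn (fun p : ℤ × ℤ => N l h p.1 p.2)
      {p : ℤ × ℤ | 0 < p.1 ∧ 0 < p.2} {n : ℤ | 0 < n} := by
  lift l to ℕ using hl.le
  lift h to ℕ using hh.le
  have hblock := Nat.blockPair_bijective (l := l) (h := h) (by omega) (by omega)
  have hpred := Int.bijOn_toNat_sub_one.prodMap Int.bijOn_toNat_sub_one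
  rw [univ_prod_univ] at hpred
  refine ((Int.bijOn_natCast_add_one.comp hblock.bijOn_univ).comp hpred).congr ?_
  rintro ⟨i, j⟩ ⟨hi : 0 < i, hj : 0 < j⟩
  obtain ⟨a, rfl⟩ : ∃ a : ℕ, i = a + 1 := ⟨(i - 1).toNat, by omega⟩
  obtain ⟨b, rfl⟩ : ∃ b : ℕ, j = b + 1 := ⟨(j - 1).toNat, by omega⟩
  simp [N_natCast_add_one]
end
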